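/- Let s and e be composable labelled transition systems, s' ∈ Q_s, e' ∈ Q_e and σ ∈ Utraces(s ‖ e). If s and e are mutually accepting, then s ‖ e ⟹σ s' ‖ e' if and only if s ⟹(σ↾L_s^δ) s' and e ⟹(σ↾L_e^δ) e'. -/

import Mathlib

/-- Visible labels extended with the quiescence label `δ`. -/
inductive DLabel (A : Type) where
  | act : A → DLabel A
  | δ : DLabel A
deriving DecidableEq

/-- A labelled transition system with state type `S` and label type `A`.
`T p none p'` is an internal (τ) transition; `T p (some a) p'` a visible one.
The set of states is the whole type `S`; the initial state is `q0`. -/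
structure LTS (S : Type) (A : Type) where
  T : S → Option A → S → Prop
  I : Set A
  U : Set A
  q0 : S

namespace LTS

variable {S E F A : Type}

/-- The set of visible labels. -/
def L (s : LTS S A) : Set A := s.I ∪ s.U

/-- Well-formedness of an LTS: countably many states and labels, inputs and
outputs disjoint, and visible transitions labelled in `I ∪ U`. -/
def WF (s : LTS S A) : Prop :=
  Countable S ∧ s.I.Countable ∧ s.U.Countable ∧ Disjoint s.I s.U ∧
    ∀ p a q, s.T p (some a) q → a ∈ s.L

/-- A state is quiescent if it has no output transitions and no τ-transitions. -/
def quiescent (s : LTS S A) (p : S) : Prop :=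
  (∀ x ∈ s.U, ∀ p', ¬ s.T p (some x) p') ∧ (∀ p', ¬ s.T p none p')

/-- Single-step transition relation for δ-extended labels: `δ` is a self-loop
on quiescent states. -/
def dstep (s : LTS S A) (p : S) : DLabel A → S → Prop
  | .act a, p' => s.T p (some a) p'
  | .δ, p' => p = p' ∧ s.quiescent p

/-- `eps p p'`: `p'` is reachable from `p` by finitely many τ-transitions. -/
def eps (s : LTS S A) : S → S → Prop :=
  Relation.ReflTransGen (fun p q => s.T p none q)

/-- Weak transition relation `p ⟹σ p'` over δ-extended traces. -/
def wtrans (s : LTS S A) : S → List (DLabel A) → S → Prop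
  | p, [], p' => s.eps p p'
  | p, ℓ :: σ, p'' => ∃ p1 p2, s.eps p p1 ∧ s.dstep p1 ℓ p2 ∧ s.wtrans p2 σ p''

/-- The δ-extended label set `L^δ` as a set of `DLabel`s. -/
def Ld (s : LTS S A) : Set (DLabel A) := (DLabel.act '' s.L) ∪ {DLabel.δ}

/-- `Utraces s`: δ-extended traces of `s` (from the initial state) that never
pass through a state refusing a subsequent input of the trace. -/
def Utraces (s : LTS S A) : Set (List (DLabel A)) :=
  { σ | (∀ ℓ ∈ σ, ℓ ∈ s.Ld) ∧ (∃ p, s.wtrans s.q0 σ p) ∧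
      ∀ σ1 a σ2, σ = σ1 ++ DLabel.act a :: σ2 → a ∈ s.I →
        ∀ p, s.wtrans s.q0 σ1 p → ∃ p', s.wtrans p [DLabel.act a] p' }

/-- `out p`: the outputs (including quiescence δ) enabled in state `p`. -/
def out (s : LTS S A) (p : S) : Set (DLabel A) :=
  { x | match x with
        | .act a => a ∈ s.U ∧ ∃ p', s.T p (some a) p'
        | .δ => s.quiescent p }

/-- `out` of a set of states. -/
def outSet (s : LTS S A) (P : Set S) : Set (DLabel A) := ⋃ p ∈ P, s.out p

/-- `inp p`: the inputs weakly enabled in state `p`. -/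
def inp (s : LTS S A) (p : S) : Set A :=
  { a | a ∈ s.I ∧ ∃ p', s.wtrans p [DLabel.act a] p' }

/-- The states reached from the initial state after trace `σ`. -/
def after (s : LTS S A) (σ : List (DLabel A)) : Set S :=
  { p' | s.wtrans s.q0 σ p' }

/-- Input-enabledness: every input is weakly enabled in every state. -/
def IOTS (s : LTS S A) : Prop :=
  ∀ q : S, ∀ a ∈ s.I, ∃ q', s.wtrans q [DLabel.act a] q'

/-- Two LTSs are composable iff their output sets are disjoint. -/
def Composable (s : LTS S A) (e : LTS E A) : Prop := Disjoint s.U e.U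

/-- Parallel composition of two LTSs: synchronisation on shared labels,
interleaving on non-shared labels and τ. -/
def par (s : LTS S A) (e : LTS E A) : LTS (S × E) A where
  I := (s.I \ e.U) ∪ (e.I \ s.U)
  U := s.U ∪ e.U
  q0 := (s.q0, e.q0)
  T := fun x ℓ y =>
    (s.T x.1 ℓ y.1 ∧ y.2 = x.2 ∧ (ℓ = none ∨ ∃ a ∈ s.L, ℓ = some a) ∧
      ∀ a ∈ e.L, ℓ ≠ some a) ∨
    (e.T x.2 ℓ y.2 ∧ y.1 = x.1 ∧ (ℓ = none ∨ ∃ a ∈ e.L, ℓ = some a) ∧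
      ∀ a ∈ s.L, ℓ ≠ some a) ∨
    (∃ a ∈ s.L ∩ e.L, ℓ = some a ∧ s.T x.1 (some a) y.1 ∧ e.T x.2 (some a) y.2)

/-- The uioco implementation relation. -/
def uioco (i : LTS E A) (s : LTS S A) : Prop :=
  ∀ σ ∈ s.Utraces, i.outSet (i.after σ) ⊆ s.outSet (s.after σ)

/-- `s.Accepts e`: along every Utrace of `s ‖ e`, every output of `e` that is an
input label of `s` is actually accepted by `s` and is an output of `e`. -/
def Accepts (s : LTS S A) (e : LTS E A) : Prop :=
  ∀ σ ∈ (s.par e).Utraces, ∀ p q, (s.par e).wtrans (s.par e).q0 σ (p, q) →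
    ∀ a, DLabel.act a ∈ e.out q → a ∈ s.I → a ∈ s.inp p ∧ a ∈ e.U

/-- Mutual acceptance. -/
def MutuallyAccepts (s : LTS S A) (e : LTS E A) : Prop := s.Accepts e ∧ e.Accepts s

/-- Isomorphism of LTSs: equal label sets and a bijection on states preserving
the initial state and all transitions (including τ and δ). -/
def Isomorphic (s : LTS S A) (s' : LTS E A) : Prop :=
  s.I = s'.I ∧ s.U = s'.U ∧ ∃ f : S ≃ E, f s.q0 = s'.q0 ∧
    (∀ p p' ℓ, s.T p ℓ p' ↔ s'.T (f p) ℓ (f p')) ∧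
    (∀ p p', s.dstep p DLabel.δ p' ↔ s'.dstep (f p) DLabel.δ (f p'))

open Classical in
/-- Projection of a trace onto a set of labels. -/
noncomputable def proj : List (DLabel A) → Set (DLabel A) → List (DLabel A)
  | [], _ => []
  | ℓ :: σ, 𝓛 => if ℓ ∈ 𝓛 then ℓ :: proj σ 𝓛 else proj σ 𝓛

end LTS

/-!
A weak run of `s ‖ e` consists of τ-steps and visible steps of either component,
synchronisations on shared labels, and δ-steps; conversely, component runs along the projections
interleave into a run of `s ‖ e`. Only δ does not project for free: `s ‖ e` may be quiescent
while `s` still has an output on which `e` cannot synchronise yet. Along a Utrace, mutual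
acceptance rules this out: such an output is an input of `e` (outputs are disjoint), so `e`
accepts it after τ-steps, of which the quiescent `e` has none; hence `s ‖ e` could synchronise.
-/

namespace LTS

variable {S E A : Type}

section Traces

variable {u : LTS S A} {p q r : S} {σ σ₁ σ₂ : List (DLabel A)}

lemma wtrans_singleton_of_dstep {ℓ : DLabel A} (h : u.dstep p ℓ q) : u.wtrans p [ℓ] q :=
  ⟨p, q, .refl, h, .refl⟩

lemma wtrans_of_eps_of_wtrans (h₁ : u.eps p q) (h₂ : u.wtrans q σ r) : u.wtrans p σ r := by
  cases σ with
  | nil => exact h₁.trans h₂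
  | cons ℓ σ =>
    obtain ⟨p₁, p₂, hε, hℓ, hσ⟩ := h₂
    exact ⟨p₁, p₂, h₁.trans hε, hℓ, hσ⟩

lemma wtrans_append (h₁ : u.wtrans p σ₁ q) (h₂ : u.wtrans q σ₂ r) :
    u.wtrans p (σ₁ ++ σ₂) r := by
  induction σ₁ generalizing p with
  | nil => exact wtrans_of_eps_of_wtrans h₁ h₂
  | cons ℓ σ ih =>
    obtain ⟨p₁, p₂, hε, hℓ, hσ⟩ := h₁
    exact ⟨p₁, p₂, hε, hℓ, ih hσ⟩

lemma wtrans_of_wtrans_of_eps (h₁ : u.wtrans p σ q) (h₂ : u.eps q r) : u.wtrans p σ r := by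
  simpa using wtrans_append (σ₂ := []) h₁ h₂

lemma exists_of_wtrans_append (h : u.wtrans p (σ₁ ++ σ₂) r) :
    ∃ q, u.wtrans p σ₁ q ∧ u.wtrans q σ₂ r := by
  induction σ₁ generalizing p with
  | nil => exact ⟨p, .refl, h⟩
  | cons ℓ σ ih =>
    obtain ⟨p₁, p₂, hε, hℓ, hσ⟩ := h
    obtain ⟨q, hσ₁, hσ₂⟩ := ih hσ
    exact ⟨q, ⟨p₁, p₂, hε, hℓ, hσ₁⟩, hσ₂⟩

lemma wtrans_map {v : LTS E A} (f : S → E) (hτ : ∀ p p', u.T p none p' → v.T (f p) none (f p'))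
    (hd : ∀ p ℓ p', u.dstep p ℓ p' → v.dstep (f p) ℓ (f p')) (h : u.wtrans p σ q) :
    v.wtrans (f p) σ (f q) := by
  have hε : ∀ {p q}, u.eps p q → v.eps (f p) (f q) := Relation.ReflTransGen.lift f hτ _ _
  induction σ generalizing p with
  | nil => exact hε h
  | cons ℓ σ ih =>
    obtain ⟨p₁, p₂, hε₁, hℓ, hσ⟩ := h
    exact ⟨f p₁, f p₂, hε hε₁, hd _ _ _ hℓ, ih hσ⟩

lemma mem_Utraces_of_append_mem (h : σ₁ ++ σ₂ ∈ u.Utraces) : σ₁ ∈ u.Utraces := by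
  obtain ⟨hL, ⟨r, hr⟩, hin⟩ := h
  refine ⟨fun ℓ hℓ => hL ℓ (List.mem_append_left _ hℓ), ?_, ?_⟩
  · obtain ⟨q, hq, -⟩ := exists_of_wtrans_append hr
    exact ⟨q, hq⟩
  · rintro τ₁ a τ₂ rfl ha
    exact hin τ₁ a (τ₂ ++ σ₂) (by simp) ha

lemma exists_T_of_mem_inp {a : A} (h : a ∈ u.inp p) (hτ : ∀ p', ¬ u.T p none p') :
    ∃ p', u.T p (some a) p' := by
  obtain ⟨-, -, p₁, p₂, hε, hT, -⟩ := h
  rcases hε.cases_head with rfl | ⟨p', hp', -⟩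
  · exact ⟨p₂, hT⟩
  · exact absurd hp' (hτ p')

end Traces

section Labels

variable {ℓ : DLabel A} {𝓛 : Set (DLabel A)}

lemma act_mem_Ld {u : LTS S A} {a : A} : DLabel.act a ∈ u.Ld ↔ a ∈ u.L := by
  simp [Ld]

lemma δ_mem_Ld {u : LTS S A} : DLabel.δ ∈ u.Ld := Or.inr rfl

lemma proj_singleton_of_mem (h : ℓ ∈ 𝓛) : proj [ℓ] 𝓛 = [ℓ] := by
  simp [proj, h]

lemma proj_singleton_of_notMem (h : ℓ ∉ 𝓛) : proj [ℓ] 𝓛 = [] := by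
  simp [proj, h]

lemma proj_cons (σ : List (DLabel A)) : proj (ℓ :: σ) 𝓛 = proj [ℓ] 𝓛 ++ proj σ 𝓛 := by
  by_cases h : ℓ ∈ 𝓛 <;> simp [proj, h]

end Labels

section Composition

variable {s : LTS S A} {e : LTS E A} {p p' : S} {q q' : E}

lemma T_par_some_iff {a : A} :
    (s.par e).T (p, q) (some a) (p', q') ↔
      (s.T p (some a) p' ∧ q' = q ∧ a ∈ s.L ∧ a ∉ e.L) ∨
      (e.T q (some a) q' ∧ p' = p ∧ a ∈ e.L ∧ a ∉ s.L) ∨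
      (s.T p (some a) p' ∧ e.T q (some a) q' ∧ a ∈ s.L ∧ a ∈ e.L) := by
  simp only [par, Option.some.injEq, reduceCtorEq, false_or, exists_eq_right', ne_eq]
  constructor
  · rintro (⟨hT, hq, hs, he⟩ | ⟨hT, hp, he, hs⟩ | ⟨b, hb, rfl, hT⟩)
    · exact .inl ⟨hT, hq, hs, fun h => he a h rfl⟩
    · exact .inr (.inl ⟨hT, hp, he, fun h => hs a h rfl⟩)
    · exact .inr (.inr ⟨hT.1, hT.2, hb⟩)
  · rintro (⟨hT, hq, hs, he⟩ | ⟨hT, hp, he, hs⟩ | ⟨hTs, hTe, hb⟩)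
    · exact .inl ⟨hT, hq, hs, fun b hb hab => he (hab ▸ hb)⟩
    · exact .inr (.inl ⟨hT, hp, he, fun b hb hab => hs (hab ▸ hb)⟩)
    · exact .inr (.inr ⟨a, hb, rfl, hTs, hTe⟩)

lemma T_par_of_T_left {a : A} (h : s.T p (some a) p') (hs : a ∈ s.L) (he : a ∉ e.L) :
    (s.par e).T (p, q) (some a) (p', q) :=
  T_par_some_iff.mpr (.inl ⟨h, rfl, hs, he⟩)

lemma T_par_of_T_right {a : A} (h : e.T q (some a) q') (he : a ∈ e.L) (hs : a ∉ s.L) :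
    (s.par e).T (p, q) (some a) (p, q') :=
  T_par_some_iff.mpr (.inr (.inl ⟨h, rfl, he, hs⟩))

lemma T_par_of_T_of_T {a : A} (hs : s.T p (some a) p') (he : e.T q (some a) q')
    (hsL : a ∈ s.L) (heL : a ∈ e.L) : (s.par e).T (p, q) (some a) (p', q') :=
  T_par_some_iff.mpr (.inr (.inr ⟨hs, he, hsL, heL⟩))

lemma L_par_subset : (s.par e).L ⊆ s.L ∪ e.L := by
  rintro a ((⟨ha, -⟩ | ⟨ha, -⟩) | ha | ha)
  exacts [.inl (.inl ha), .inr (.inl ha), .inl (.inr ha), .inr (.inr ha)]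

lemma T_par_none_iff :
    (s.par e).T (p, q) none (p', q') ↔ (s.T p none p' ∧ q' = q) ∨ (e.T q none q' ∧ p' = p) := by
  simp [par]

lemma eps_par_iff : (s.par e).eps (p, q) (p', q') ↔ s.eps p p' ∧ e.eps q q' := by
  constructor
  · suffices ∀ {x y : S × E}, (s.par e).eps x y → s.eps x.1 y.1 ∧ e.eps x.2 y.2 from this
    intro x y h
    induction h with
    | refl => exact ⟨.refl, .refl⟩
    | @tail y z _ hT ih =>
      obtain ⟨y₁, y₂⟩ := y
      obtain ⟨z₁, z₂⟩ := z
      rcases T_par_none_iff.mp hT with ⟨hs, rfl⟩ | ⟨he, rfl⟩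
      · exact ⟨ih.1.tail hs, ih.2⟩
      · exact ⟨ih.1, ih.2.tail he⟩
  · rintro ⟨hs, he⟩
    have hs' : (s.par e).eps (p, q) (p', q) :=
      Relation.ReflTransGen.lift (·, q) (fun _ _ hT => T_par_none_iff.mpr (.inl ⟨hT, rfl⟩)) _ _ hs
    have he' : (s.par e).eps (p', q) (p', q') :=
      Relation.ReflTransGen.lift (p', ·) (fun _ _ hT => T_par_none_iff.mpr (.inr ⟨hT, rfl⟩)) _ _ he
    exact hs'.trans he'

lemma quiescent_par (hs : s.quiescent p) (he : e.quiescent q) : (s.par e).quiescent (p, q) := by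
  refine ⟨?_, fun ⟨p', q'⟩ hT => ?_⟩
  · rintro a (ha | ha) ⟨p', q'⟩ hT <;> rcases T_par_some_iff.mp hT with
      ⟨hT, -, -, hne⟩ | ⟨hT, -, -, hne⟩ | ⟨hTs, hTe, -, -⟩
    · exact hs.1 a ha p' hT
    · exact hne (Or.inr ha)
    · exact hs.1 a ha p' hTs
    · exact hne (Or.inr ha)
    · exact he.1 a ha q' hT
    · exact he.1 a ha q' hTe
  · rcases T_par_none_iff.mp hT with ⟨hT, -⟩ | ⟨hT, -⟩
    · exact hs.2 p' hT
    · exact he.2 q' hT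

lemma quiescent_right_of_quiescent_par (h : (s.par e).quiescent (p, q))
    (hacc : ∀ a ∈ e.U, a ∈ s.L → (∃ q', e.T q (some a) q') → a ∈ s.inp p) : e.quiescent q := by
  have hτ : ∀ p', ¬ s.T p none p' := fun p' hT => h.2 (p', q) (T_par_none_iff.mpr (.inl ⟨hT, rfl⟩))
  refine ⟨fun a ha q' hT => ?_, fun q' hT => h.2 (p, q') (T_par_none_iff.mpr (.inr ⟨hT, rfl⟩))⟩
  by_cases hs : a ∈ s.L
  · obtain ⟨p', hT'⟩ := exists_T_of_mem_inp (hacc a ha hs ⟨q', hT⟩) hτ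
    exact h.1 a (.inr ha) _ (T_par_of_T_of_T hT' hT hs (.inr ha))
  · exact h.1 a (.inr ha) _ (T_par_of_T_right hT (.inr ha) hs)

lemma T_par_swap {ℓ : Option A} {x y : S × E} (h : (s.par e).T x ℓ y) :
    (e.par s).T x.swap ℓ y.swap := by
  rcases h with h | h | ⟨a, ⟨hs, he⟩, h⟩
  · exact .inr (.inl h)
  · exact .inl h
  · exact .inr (.inr ⟨a, ⟨he, hs⟩, h.1, h.2.2, h.2.1⟩)

lemma U_par_comm : (e.par s).U = (s.par e).U := Set.union_comm _ _

lemma I_par_comm : (e.par s).I = (s.par e).I := Set.union_comm _ _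

lemma Ld_par_comm : (e.par s).Ld = (s.par e).Ld := by
  simp only [Ld, L, I_par_comm, U_par_comm]

lemma quiescent_par_swap {x : S × E} (h : (s.par e).quiescent x) :
    (e.par s).quiescent x.swap :=
  ⟨fun a ha y hT => h.1 a (U_par_comm ▸ ha) y.swap (T_par_swap hT),
    fun y hT => h.2 y.swap (T_par_swap hT)⟩

lemma wtrans_par_swap {σ : List (DLabel A)} {x y : S × E} (h : (s.par e).wtrans x σ y) :
    (e.par s).wtrans x.swap σ y.swap := by
  refine wtrans_map Prod.swap (fun _ _ => T_par_swap) (fun x ℓ y hd => ?_) h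
  cases ℓ with
  | act a => exact T_par_swap hd
  | δ => exact ⟨congrArg Prod.swap hd.1, quiescent_par_swap hd.2⟩

lemma mem_Utraces_par_swap {σ : List (DLabel A)} (h : σ ∈ (s.par e).Utraces) :
    σ ∈ (e.par s).Utraces := by
  obtain ⟨hL, ⟨x, hx⟩, hin⟩ := h
  refine ⟨Ld_par_comm ▸ hL, ⟨x.swap, wtrans_par_swap hx⟩, ?_⟩
  intro σ₁ a σ₂ hσ ha y hy
  obtain ⟨z, hz⟩ := hin σ₁ a σ₂ hσ (I_par_comm ▸ ha) y.swap (wtrans_par_swap hy)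
  exact ⟨z.swap, wtrans_par_swap hz⟩

end Composition

section Acceptance

variable {s : LTS S A} {e : LTS E A} {p : S} {q : E} {σ : List (DLabel A)}

lemma Accepts.quiescent_right (hacc : s.Accepts e) (hc : Composable s e)
    (hσ : σ ∈ (s.par e).Utraces) (hw : (s.par e).wtrans (s.par e).q0 σ (p, q))
    (hq : (s.par e).quiescent (p, q)) : e.quiescent q :=
  quiescent_right_of_quiescent_par hq fun a ha hs hT =>
    (hacc σ hσ p q hw a ⟨ha, hT⟩ (hs.resolve_right (Set.disjoint_right.mp hc ha))).1

lemma MutuallyAccepts.quiescent_of_quiescent_par (hma : s.MutuallyAccepts e)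
    (hc : Composable s e) (hσ : σ ∈ (s.par e).Utraces)
    (hw : (s.par e).wtrans (s.par e).q0 σ (p, q)) (hq : (s.par e).quiescent (p, q)) :
    s.quiescent p ∧ e.quiescent q :=
  ⟨hma.2.quiescent_right hc.symm (mem_Utraces_par_swap hσ) (wtrans_par_swap hw)
      (quiescent_par_swap hq),
    hma.1.quiescent_right hc hσ hw hq⟩

end Acceptance

section Projection

variable {s : LTS S A} {e : LTS E A} {p p' s' : S} {q q' e' : E} {ℓ : DLabel A}

lemma wtrans_proj_of_dstep_par (h : (s.par e).dstep (p, q) ℓ (p', q'))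
    (hq : (s.par e).quiescent (p, q) → s.quiescent p ∧ e.quiescent q) :
    s.wtrans p (proj [ℓ] s.Ld) p' ∧ e.wtrans q (proj [ℓ] e.Ld) q' := by
  cases ℓ with
  | δ =>
    obtain ⟨heq, hpq⟩ := h
    obtain ⟨rfl, rfl⟩ := Prod.mk.inj heq
    rw [proj_singleton_of_mem δ_mem_Ld, proj_singleton_of_mem δ_mem_Ld]
    exact ⟨wtrans_singleton_of_dstep ⟨rfl, (hq hpq).1⟩, wtrans_singleton_of_dstep ⟨rfl, (hq hpq).2⟩⟩
  | act a =>
    rcases T_par_some_iff.mp h with ⟨hT, rfl, hs, he⟩ | ⟨hT, rfl, he, hs⟩ | ⟨hTs, hTe, hs, he⟩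
    · rw [proj_singleton_of_mem (act_mem_Ld.mpr hs), proj_singleton_of_notMem (mt act_mem_Ld.mp he)]
      exact ⟨wtrans_singleton_of_dstep hT, .refl⟩
    · rw [proj_singleton_of_notMem (mt act_mem_Ld.mp hs), proj_singleton_of_mem (act_mem_Ld.mpr he)]
      exact ⟨.refl, wtrans_singleton_of_dstep hT⟩
    · rw [proj_singleton_of_mem (act_mem_Ld.mpr hs), proj_singleton_of_mem (act_mem_Ld.mpr he)]
      exact ⟨wtrans_singleton_of_dstep hTs, wtrans_singleton_of_dstep hTe⟩

lemma wtrans_proj_of_wtrans_par (hc : Composable s e) (hma : s.MutuallyAccepts e)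
    {σ₀ σ : List (DLabel A)} (hU : σ₀ ++ σ ∈ (s.par e).Utraces)
    (h₀ : (s.par e).wtrans (s.par e).q0 σ₀ (p, q)) (h : (s.par e).wtrans (p, q) σ (s', e')) :
    s.wtrans p (proj σ s.Ld) s' ∧ e.wtrans q (proj σ e.Ld) e' := by
  induction σ generalizing σ₀ p q with
  | nil => exact eps_par_iff.mp h
  | cons ℓ σ ih =>
    obtain ⟨⟨p₁, q₁⟩, ⟨p₂, q₂⟩, hε, hℓ, hσ⟩ := h
    have hε' := eps_par_iff.mp hε
    have h₁ := wtrans_of_wtrans_of_eps h₀ hε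
    have hstep := wtrans_proj_of_dstep_par hℓ
      (hma.quiescent_of_quiescent_par hc (mem_Utraces_of_append_mem hU) h₁)
    have hrest := ih (σ₀ := σ₀ ++ [ℓ]) (by simpa using hU)
      (wtrans_append h₁ (wtrans_singleton_of_dstep hℓ)) hσ
    rw [proj_cons σ, proj_cons σ]
    exact ⟨wtrans_of_eps_of_wtrans hε'.1 (wtrans_append hstep.1 hrest.1),
      wtrans_of_eps_of_wtrans hε'.2 (wtrans_append hstep.2 hrest.2)⟩

lemma wtrans_par_singleton_of_wtrans_proj (hℓ : ℓ ∈ (s.par e).Ld)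
    (hs : s.wtrans p (proj [ℓ] s.Ld) p') (he : e.wtrans q (proj [ℓ] e.Ld) q') :
    (s.par e).wtrans (p, q) [ℓ] (p', q') := by
  cases ℓ with
  | δ =>
    rw [proj_singleton_of_mem δ_mem_Ld] at hs he
    obtain ⟨p₁, _, hεs, ⟨rfl, hqs⟩, hεs'⟩ := hs
    obtain ⟨q₁, _, hεe, ⟨rfl, hqe⟩, hεe'⟩ := he
    exact ⟨(p₁, q₁), (p₁, q₁), eps_par_iff.mpr ⟨hεs, hεe⟩, ⟨rfl, quiescent_par hqs hqe⟩,
      eps_par_iff.mpr ⟨hεs', hεe'⟩⟩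
  | act a =>
    have ha : a ∈ s.L ∪ e.L := L_par_subset (act_mem_Ld.mp hℓ)
    by_cases hsL : a ∈ s.L <;> by_cases heL : a ∈ e.L
    · rw [proj_singleton_of_mem (act_mem_Ld.mpr hsL)] at hs
      rw [proj_singleton_of_mem (act_mem_Ld.mpr heL)] at he
      obtain ⟨p₁, p₂, hεs, hTs, hεs'⟩ := hs
      obtain ⟨q₁, q₂, hεe, hTe, hεe'⟩ := he
      exact ⟨(p₁, q₁), (p₂, q₂), eps_par_iff.mpr ⟨hεs, hεe⟩, T_par_of_T_of_T hTs hTe hsL heL,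
        eps_par_iff.mpr ⟨hεs', hεe'⟩⟩
    · rw [proj_singleton_of_mem (act_mem_Ld.mpr hsL)] at hs
      rw [proj_singleton_of_notMem (mt act_mem_Ld.mp heL)] at he
      obtain ⟨p₁, p₂, hεs, hTs, hεs'⟩ := hs
      exact ⟨(p₁, q), (p₂, q), eps_par_iff.mpr ⟨hεs, .refl⟩, T_par_of_T_left hTs hsL heL,
        eps_par_iff.mpr ⟨hεs', he⟩⟩
    · rw [proj_singleton_of_notMem (mt act_mem_Ld.mp hsL)] at hs
      rw [proj_singleton_of_mem (act_mem_Ld.mpr heL)] at he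
      obtain ⟨q₁, q₂, hεe, hTe, hεe'⟩ := he
      exact ⟨(p, q₁), (p, q₂), eps_par_iff.mpr ⟨.refl, hεe⟩, T_par_of_T_right hTe heL hsL,
        eps_par_iff.mpr ⟨hs, hεe'⟩⟩
    · exact (ha.elim hsL heL).elim

lemma wtrans_par_of_wtrans_proj {σ : List (DLabel A)} (hσ : ∀ ℓ ∈ σ, ℓ ∈ (s.par e).Ld)
    (hs : s.wtrans p (proj σ s.Ld) s') (he : e.wtrans q (proj σ e.Ld) e') :
    (s.par e).wtrans (p, q) σ (s', e') := by
  induction σ generalizing p q with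
  | nil => exact eps_par_iff.mpr ⟨hs, he⟩
  | cons ℓ σ ih =>
    rw [proj_cons] at hs he
    obtain ⟨p', hs₁, hs₂⟩ := exists_of_wtrans_append hs
    obtain ⟨q', he₁, he₂⟩ := exists_of_wtrans_append he
    exact wtrans_append (wtrans_par_singleton_of_wtrans_proj (hσ ℓ List.mem_cons_self) hs₁ he₁)
      (ih (fun ℓ' h => hσ ℓ' (List.mem_cons_of_mem _ h)) hs₂ he₂)

end Projection

end LTS

theorem wtrans_par_iff_of_mutuallyAccepts_general {S E A : Type} (s : LTS S A) (e : LTS E A)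
    (hc : LTS.Composable s e)
    (s' : S) (e' : E) (σ : List (DLabel A)) (hσ : σ ∈ (s.par e).Utraces)
    (hma : s.MutuallyAccepts e) :
    (s.par e).wtrans (s.par e).q0 σ (s', e') ↔
      s.wtrans s.q0 (LTS.proj σ s.Ld) s' ∧ e.wtrans e.q0 (LTS.proj σ e.Ld) e' :=
  ⟨LTS.wtrans_proj_of_wtrans_par hc hma (σ₀ := []) hσ .refl,
    fun ⟨hs, he⟩ => LTS.wtrans_par_of_wtrans_proj hσ.1 hs he⟩

/-- for mutually accepting composable `s`, `e` and a Utrace `σ` of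
`s ‖ e`, a weak transition of the composition along `σ` corresponds exactly to
weak transitions of the components along the projected traces. -/
theorem wtrans_par_iff_of_mutuallyAccepts {S E A : Type} (s : LTS S A) (e : LTS E A)
    (hs : s.WF) (he : e.WF) (hc : LTS.Composable s e)
    (s' : S) (e' : E) (σ : List (DLabel A)) (hσ : σ ∈ (s.par e).Utraces)
    (hma : s.MutuallyAccepts e) :
    (s.par e).wtrans (s.par e).q0 σ (s', e') ↔
      s.wtrans s.q0 (LTS.proj σ s.Ld) s' ∧ e.wtrans e.q0 (LTS.proj σ e.Ld) e' :=
  wtrans_par_iff_of_mutuallyAccepts_general s e hc s' e' σ hσ hma
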